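/- arXiv:2603.07653 — 2 statements merged into one kernel-verified Lean document; each statement's English description precedes it below -/
import Mathlib

section
/- Let J be a finite set, μ a probability vector on J with all μ_j > 0, and let (k_j^{(n)}) be nonnegative integers summing to n with k_j^{(n)}/n → ρ_j for a probability vector ρ. Then (1/n)·log( (n!/∏_j k_j^{(n)}!) · ∏_j μ_j^{k_j^{(n)}} ) converges to -∑_j ρ_j log(ρ_j/μ_j), i.e., minus the Boltzmann relative entropy of ρ with respect to μ. -/
open Filter

lemma logfac_bounds : ∀ m : ℕ, 1 ≤ m →
    (m : ℝ) * Real.log m - m + 1 ≤ Real.log (m.factorial) ∧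
    Real.log (m.factorial) ≤ (m : ℝ) * Real.log m - m + 1 + Real.log m := by
  intro m hm
  induction m, hm using Nat.le_induction with
  | base => simp
  | succ m hm ih =>
    have hmpos : (0:ℝ) < m := by exact_mod_cast hm
    have hm1pos : (0:ℝ) < (m:ℝ) + 1 := by linarith
    have hfac : Real.log ((m+1).factorial) = Real.log ((m:ℝ)+1) + Real.log (m.factorial) := by
      rw [Nat.factorial_succ]
      push_cast
      rw [Real.log_mul (by positivity) (by positivity)]
    have hub : Real.log (((m:ℝ)+1)/m) ≤ 1/m := by
      have := Real.log_le_sub_one_of_pos (x := ((m:ℝ)+1)/m) (by positivity)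
      have h2 : ((m:ℝ)+1)/m - 1 = 1/m := by field_simp; ring
      linarith [h2 ▸ this]
    have hlb : 1/((m:ℝ)+1) ≤ Real.log (((m:ℝ)+1)/m) := by
      have := Real.one_sub_inv_le_log_of_pos (x := ((m:ℝ)+1)/m) (by positivity)
      have h2 : 1 - (((m:ℝ)+1)/m)⁻¹ = 1/((m:ℝ)+1) := by
        rw [inv_div]; field_simp; ring
      linarith [h2 ▸ this]
    have hdiff : Real.log (((m:ℝ)+1)/m) = Real.log ((m:ℝ)+1) - Real.log m := by
      rw [Real.log_div (by positivity) (by positivity)]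
    have h3 : (m:ℝ) * Real.log ((m:ℝ)+1) - (m:ℝ) * Real.log m ≤ 1 := by
      have h := mul_le_mul_of_nonneg_left hub hmpos.le
      rw [hdiff, mul_sub] at h
      have : (m:ℝ) * (1/m) = 1 := by field_simp
      linarith
    have h4 : (1:ℝ) ≤ ((m:ℝ)+1) * Real.log ((m:ℝ)+1) - ((m:ℝ)+1) * Real.log m := by
      have h := mul_le_mul_of_nonneg_left hlb hm1pos.le
      rw [hdiff, mul_sub] at h
      have : ((m:ℝ)+1) * (1/((m:ℝ)+1)) = 1 := by field_simp
      linarith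
    obtain ⟨ihl, ihu⟩ := ih
    constructor
    · push_cast [hfac]
      linarith
    · push_cast [hfac]
      linarith

/-- The error term in the Stirling-type approximation of `log m!`. -/
noncomputable def Efac (m : ℕ) : ℝ :=
  Real.log (m.factorial) - ((m:ℝ) * Real.log m - m)

lemma Efac_nonneg (m : ℕ) : 0 ≤ Efac m := by
  rcases Nat.eq_zero_or_pos m with h | h
  · simp [h, Efac]
  · have := (logfac_bounds m h).1
    simp only [Efac]; linarith

lemma Efac_le (m : ℕ) : Efac m ≤ 1 + Real.log (m + 1) := by
  rcases Nat.eq_zero_or_pos m with h | h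
  · simp [h, Efac]
  · have h1 := (logfac_bounds m h).2
    have h2 : Real.log m ≤ Real.log (m+1) := by
      apply Real.log_le_log (by exact_mod_cast h)
      push_cast; linarith
    simp only [Efac]; linarith

lemma log_factorial_eq (m : ℕ) :
    Real.log (m.factorial) = (m:ℝ) * Real.log m - m + Efac m := by
  simp only [Efac]; ring

/-- Weighted multinomial asymptotics: with a probability vector `μ` with all
`μ_j > 0` and `k_j^{(n)}/n → ρ_j`, one has
`(1/n)·log((n!/∏_j k_j^{(n)}!)·∏_j μ_j^{k_j^{(n)}}) → -∑_j ρ_j log(ρ_j/μ_j)`,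
minus the Boltzmann relative entropy of `ρ` with respect to `μ`. -/
theorem weighted_multinomial_relative_entropy
    {J : Type*} [Fintype J]
    (k : ℕ → J → ℕ) (ρ μ : J → ℝ)
    (hμpos : ∀ j, 0 < μ j) (hμsum : ∑ j, μ j = 1)
    (hsum : ∀ n, ∑ j, k n j = n)
    (hρ : ∀ j, 0 ≤ ρ j ∧ ρ j ≤ 1) (hρsum : ∑ j, ρ j = 1)
    (hconv : ∀ j, Tendsto (fun n : ℕ => (k n j : ℝ) / n) atTop (nhds (ρ j))) :
    Tendsto (fun n : ℕ =>
        (1 / n : ℝ) * Real.log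
          (((n.factorial : ℝ) / ∏ j, ((k n j).factorial : ℝ)) *
            ∏ j, μ j ^ (k n j)))
      atTop (nhds (-∑ j, ρ j * Real.log (ρ j / μ j))) := by
  classical
  set g : ℕ → ℝ := fun n =>
    Efac n / n - (∑ j, Efac (k n j)) / n
      - ∑ j, ((k n j : ℝ)/n) * Real.log ((k n j : ℝ)/n)
      + ∑ j, ((k n j : ℝ)/n) * Real.log (μ j) with hg
  -- Step 1: the expression equals g n for n ≥ 1
  have key : ∀ n : ℕ, 1 ≤ n →
      (1 / n : ℝ) * Real.log
          (((n.factorial : ℝ) / ∏ j, ((k n j).factorial : ℝ)) *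
            ∏ j, μ j ^ (k n j)) = g n := by
    intro n hn
    have npos : (0:ℝ) < n := by exact_mod_cast hn
    have h1 : ∀ j, (0:ℝ) < ((k n j).factorial : ℝ) := fun j => by
      exact_mod_cast (k n j).factorial_pos
    have hprodfac : (0:ℝ) < ∏ j, ((k n j).factorial:ℝ) :=
      Finset.prod_pos (fun j _ => h1 j)
    have hnfac : (0:ℝ) < (n.factorial:ℝ) := by exact_mod_cast n.factorial_pos
    have hprodmu : (0:ℝ) < ∏ j, μ j ^ (k n j) :=
      Finset.prod_pos (fun j _ => pow_pos (hμpos j) _)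
    rw [Real.log_mul (div_pos hnfac hprodfac).ne' hprodmu.ne',
        Real.log_div hnfac.ne' hprodfac.ne',
        Real.log_prod (fun j _ => (h1 j).ne'),
        Real.log_prod (fun j _ => (pow_pos (hμpos j) _).ne')]
    simp only [Real.log_pow]
    have hk : ∀ j, Real.log (((k n j).factorial : ℝ)) =
        (k n j : ℝ) * Real.log ((k n j : ℝ)/n) + (k n j : ℝ) * Real.log n
          - (k n j : ℝ) + Efac (k n j) := by
      intro j
      rcases Nat.eq_zero_or_pos (k n j) with h | h
      · simp [h, Efac]
      · have hkpos : (0:ℝ) < (k n j : ℝ) := by exact_mod_cast h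
        have hdiv : Real.log ((k n j : ℝ)/n) = Real.log (k n j) - Real.log n :=
          Real.log_div hkpos.ne' npos.ne'
        rw [log_factorial_eq, hdiv]; push_cast; ring
    have hcast : (∑ j, (k n j : ℝ)) = (n : ℝ) := by
      exact_mod_cast congrArg (Nat.cast : ℕ → ℝ) (hsum n)
    have hsum1 : ∑ j, Real.log (((k n j).factorial : ℝ)) =
        (∑ j, (k n j : ℝ) * Real.log ((k n j : ℝ)/n))
          + (n:ℝ) * Real.log n - (n:ℝ) + ∑ j, Efac (k n j) := by
      rw [Finset.sum_congr rfl (fun j _ => hk j)]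
      rw [Finset.sum_add_distrib, Finset.sum_sub_distrib, Finset.sum_add_distrib,
          ← Finset.sum_mul, hcast]
    rw [hsum1, log_factorial_eq n, hg]
    simp only [div_mul_eq_mul_div, ← Finset.sum_div]
    push_cast
    field_simp
    ring
  -- Step 2: limits of the pieces of g
  have haux : Tendsto (fun n : ℕ => (1 + Real.log (n+1)) / n) atTop (nhds 0) := by
    have hlog : Tendsto (fun x : ℝ => Real.log x / x) atTop (nhds 0) := by
      have := Real.isLittleO_log_id_atTop.tendsto_div_nhds_zero
      simpa using this
    have h2 : Tendsto (fun n : ℕ => Real.log ((n:ℝ)+1) / ((n:ℝ)+1)) atTop (nhds 0) :=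
      hlog.comp (tendsto_atTop_add_const_right _ 1 tendsto_natCast_atTop_atTop)
    have h3 : Tendsto (fun n : ℕ => ((n:ℝ)+1)/n) atTop (nhds 1) := by
      have := tendsto_const_nhds (x := (1:ℝ)) (f := atTop (α := ℕ)) |>.add
        tendsto_one_div_atTop_nhds_zero_nat
      rw [add_zero] at this
      apply this.congr'
      filter_upwards [eventually_ge_atTop 1] with n hn
      have : (0:ℝ) < n := by exact_mod_cast hn
      field_simp
    have h4 : Tendsto (fun n : ℕ => Real.log ((n:ℝ)+1) / n) atTop (nhds 0) := by
      have := h2.mul h3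
      rw [zero_mul] at this
      apply this.congr'
      filter_upwards [eventually_ge_atTop 1] with n hn
      have hpos : (0:ℝ) < n := by exact_mod_cast hn
      field_simp
    have := tendsto_one_div_atTop_nhds_zero_nat.add h4
    rw [add_zero] at this
    apply this.congr
    intro n
    rw [add_div]
  have hE0 : Tendsto (fun n : ℕ => Efac n / n) atTop (nhds 0) := by
    apply squeeze_zero (fun n => div_nonneg (Efac_nonneg n) (Nat.cast_nonneg n)) _ haux
    intro n
    rcases Nat.eq_zero_or_pos n with h | h
    · simp [h]
    · have hn : (0:ℝ) < n := by exact_mod_cast h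
      gcongr
      exact Efac_le n
  have hE1 : Tendsto (fun n : ℕ => (∑ j, Efac (k n j)) / n) atTop (nhds 0) := by
    have hcard : Tendsto (fun n : ℕ =>
        (Fintype.card J : ℝ) * ((1 + Real.log (n+1)) / n)) atTop (nhds 0) := by
      have := haux.const_mul (Fintype.card J : ℝ)
      rwa [mul_zero] at this
    apply squeeze_zero _ _ hcard
    · intro n
      apply div_nonneg _ (Nat.cast_nonneg n)
      exact Finset.sum_nonneg (fun j _ => Efac_nonneg _)
    · intro n
      have hbd : (∑ j, Efac (k n j)) ≤ (Fintype.card J : ℝ) * (1 + Real.log (n+1)) := by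
        calc (∑ j, Efac (k n j)) ≤ ∑ _j : J, (1 + Real.log (n+1)) := by
              apply Finset.sum_le_sum
              intro j _
              refine (Efac_le _).trans ?_
              have hkle : k n j ≤ n := by
                have h0 : k n j ≤ ∑ j', k n j' :=
                  Finset.single_le_sum (f := fun j' => k n j')
                    (fun _ _ => Nat.zero_le _) (Finset.mem_univ j)
                rwa [hsum n] at h0
              have : Real.log ((k n j : ℝ)+1) ≤ Real.log ((n:ℝ)+1) := by
                apply Real.log_le_log (by positivity)
                have : (k n j : ℝ) ≤ n := by exact_mod_cast hkle
                linarith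
              push_cast
              linarith
          _ = (Fintype.card J : ℝ) * (1 + Real.log (n+1)) := by
              rw [Finset.sum_const, Finset.card_univ, nsmul_eq_mul]
      rcases Nat.eq_zero_or_pos n with h | h
      · simp [h]
      · have hnpos : (0:ℝ) < n := by exact_mod_cast h
        calc (∑ j, Efac (k n j)) / n
            ≤ ((Fintype.card J : ℝ) * (1 + Real.log (n+1))) / n := by
              gcongr
          _ = (Fintype.card J : ℝ) * ((1 + Real.log (n+1)) / n) := by ring
  have hxlogx : Tendsto (fun n : ℕ => ∑ j, ((k n j : ℝ)/n) * Real.log ((k n j : ℝ)/n))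
      atTop (nhds (∑ j, ρ j * Real.log (ρ j))) := by
    apply tendsto_finset_sum
    intro j _
    exact (Real.continuous_mul_log.tendsto (ρ j)).comp (hconv j)
  have hμlim : Tendsto (fun n : ℕ => ∑ j, ((k n j : ℝ)/n) * Real.log (μ j))
      atTop (nhds (∑ j, ρ j * Real.log (μ j))) := by
    apply tendsto_finset_sum
    intro j _
    exact (hconv j).mul_const _
  have hmain : Tendsto g atTop
      (nhds (0 - 0 - ∑ j, ρ j * Real.log (ρ j) + ∑ j, ρ j * Real.log (μ j))) :=
    ((hE0.sub hE1).sub hxlogx).add hμlim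
  have hfinal : (0:ℝ) - 0 - (∑ j, ρ j * Real.log (ρ j)) + ∑ j, ρ j * Real.log (μ j)
      = -∑ j, ρ j * Real.log (ρ j / μ j) := by
    have hj : ∀ j, ρ j * Real.log (ρ j / μ j)
        = ρ j * Real.log (ρ j) - ρ j * Real.log (μ j) := by
      intro j
      rcases eq_or_lt_of_le (hρ j).1 with h | h
      · simp [← h]
      · rw [Real.log_div h.ne' (hμpos j).ne']; ring
    rw [Finset.sum_congr rfl (fun j _ => hj j), Finset.sum_sub_distrib]
    ring
  rw [← hfinal]
  apply hmain.congr'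
  filter_upwards [eventually_ge_atTop 1] with n hn
  exact (key n hn).symm
end

section
/- Let φ ∈ ℝ → ℝ be a Schwartz function and suppose Δωₙ → 0 and n·Δωₙ → ∞. Then the Riemann-type sums Δωₙ · ∑_{j=1}^{n} Re φ̂(j·Δωₙ) converge to ∫₀^∞ Re φ̂(ω) dω as n → ∞, where φ̂ denotes the Fourier transform of φ. Consequently ∫_ℝ φ(t) · Δωₙ ∑_{j=1}^n cos(j Δωₙ t) dt → π φ(0), i.e., the kernels Δωₙ ∑_{j=1}^n cos(ω_j t) converge to π·δ₀ in the distributional sense. -/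
open Filter MeasureTheory Set intervalIntegral


/-- Complexification of a real Schwartz function. -/
noncomputable def SchwartzMap.toComplex (φ : SchwartzMap ℝ ℝ) : SchwartzMap ℝ ℂ where
  toFun x := (φ x : ℂ)
  smooth' := Complex.ofRealCLM.contDiff.comp (φ.smooth ⊤)
  decay' := by
    intro k n
    obtain ⟨C, hC⟩ := φ.decay' k n
    refine ⟨C, fun x => ?_⟩
    have h : (fun x : ℝ => ((φ x : ℂ))) = (Complex.ofRealLI ∘ ⇑φ) := rfl
    rw [h, Complex.ofRealLI.norm_iteratedFDeriv_comp_left (φ.smooth ⊤).contDiffAt (by exact_mod_cast le_top)]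
    exact hC x

@[simp] lemma SchwartzMap.toComplex_apply (φ : SchwartzMap ℝ ℝ) (x : ℝ) :
    φ.toComplex x = (φ x : ℂ) := rfl

/-- Riemann sum error estimate. -/
lemma riemann_est (g h : ℝ → ℝ) (hderiv : ∀ x, HasDerivAt g (h x) x)
    (hh_int : Integrable h) (hh_cont : Continuous h)
    (Δ : ℝ) (hΔ : 0 < Δ) (n : ℕ) :
    |Δ * ∑ j ∈ Finset.Icc 1 n, g ((j : ℝ) * Δ) - ∫ x in (0:ℝ)..((n:ℝ) * Δ), g x|
      ≤ Δ * ∫ x, |h x| := by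
  have hg_cont : Continuous g :=
    continuous_iff_continuousAt.2 fun x => (hderiv x).differentiableAt.continuousAt
  set a : ℕ → ℝ := fun k => (k : ℝ) * Δ with ha
  have hak : ∀ k : ℕ, a k ≤ a (k + 1) := by
    intro k
    simp only [ha]
    push_cast
    nlinarith [hΔ.le]
  have hint : ∀ k : ℕ, IntervalIntegrable g volume (a k) (a (k + 1)) :=
    fun k => hg_cont.intervalIntegrable _ _
  have hinth : ∀ (u v : ℝ), IntervalIntegrable h volume u v :=
    fun u v => hh_cont.intervalIntegrable _ _
  have hsplit : ∫ x in (0:ℝ)..((n:ℝ) * Δ), g x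
      = ∑ k ∈ Finset.range n, ∫ x in a k..a (k + 1), g x := by
    rw [intervalIntegral.sum_integral_adjacent_intervals fun k _ => hint k]
    simp [ha]
  have hreidx : ∑ j ∈ Finset.Icc 1 n, g ((j : ℝ) * Δ)
      = ∑ k ∈ Finset.range n, g (a (k + 1)) := by
    rw [← Finset.Ico_add_one_right_eq_Icc, Finset.sum_Ico_eq_sum_range]
    refine Finset.sum_congr rfl fun k _ => ?_
    simp only [ha]
    push_cast
    ring_nf
  rw [hreidx, hsplit, Finset.mul_sum, ← Finset.sum_sub_distrib]
  refine le_trans (Finset.abs_sum_le_sum_abs _ _) ?_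
  have key : ∀ k ∈ Finset.range n,
      |Δ * g (a (k + 1)) - ∫ x in a k..a (k + 1), g x|
        ≤ Δ * ∫ x in a k..a (k + 1), |h x| := by
    intro k _
    have hconst : ∫ _x in a k..a (k + 1), g (a (k + 1)) = Δ * g (a (k + 1)) := by
      rw [intervalIntegral.integral_const]
      have : a (k + 1) - a k = Δ := by simp only [ha]; push_cast; ring
      rw [this]; simp
    have hbd : ∀ x ∈ Set.uIoc (a k) (a (k + 1)),
        ‖g (a (k + 1)) - g x‖ ≤ ∫ y in a k..a (k + 1), |h y| := by
      intro x hx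
      rw [Set.uIoc_of_le (hak k)] at hx
      have hx1 : a k ≤ x := le_of_lt hx.1
      have hx2 : x ≤ a (k + 1) := hx.2
      have hftc : ∫ y in x..a (k + 1), h y = g (a (k + 1)) - g x :=
        intervalIntegral.integral_eq_sub_of_hasDerivAt (fun y _ => hderiv y) (hinth _ _)
      rw [Real.norm_eq_abs, ← hftc]
      calc |∫ y in x..a (k + 1), h y| ≤ ∫ y in x..a (k + 1), |h y| := by
            simpa [Real.norm_eq_abs] using intervalIntegral.norm_integral_le_integral_norm
              (f := h) (μ := volume) hx2
        _ ≤ ∫ y in a k..a (k + 1), |h y| := by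
            rw [← intervalIntegral.integral_add_adjacent_intervals
              ((hinth (a k) x).abs) ((hinth x (a (k+1))).abs)]
            have : 0 ≤ ∫ y in a k..x, |h y| :=
              intervalIntegral.integral_nonneg hx1 (fun y _ => abs_nonneg _)
            linarith
    have := intervalIntegral.norm_integral_le_of_norm_le_const hbd
    rw [intervalIntegral.integral_sub (by exact intervalIntegrable_const) (hint k)] at this
    have hlen : |a (k + 1) - a k| = Δ := by
      simp only [ha]; push_cast
      rw [show ((k:ℝ)+1) * Δ - (k:ℝ) * Δ = Δ by ring, abs_of_pos hΔ]
    rw [hlen, hconst, Real.norm_eq_abs] at this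
    linarith [this]
  refine le_trans (Finset.sum_le_sum key) ?_
  rw [← Finset.mul_sum]
  have hsum2 : ∑ k ∈ Finset.range n, ∫ x in a k..a (k + 1), |h x|
      = ∫ x in (0:ℝ)..((n:ℝ) * Δ), |h x| := by
    rw [intervalIntegral.sum_integral_adjacent_intervals fun k _ => (hinth _ _).abs]
    simp [ha]
  rw [hsum2]
  have h0n : (0:ℝ) ≤ (n:ℝ) * Δ := by positivity
  rw [intervalIntegral.integral_of_le h0n]
  refine mul_le_mul_of_nonneg_left ?_ hΔ.le
  exact setIntegral_le_integral hh_int.abs (Eventually.of_forall fun x => abs_nonneg _)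

lemma riemann_tendsto (g h : ℝ → ℝ) (hderiv : ∀ x, HasDerivAt g (h x) x)
    (hg_int : Integrable g) (hh_int : Integrable h) (hh_cont : Continuous h)
    (Δω : ℕ → ℝ) (hΔωpos : ∀ n, 0 < Δω n) (h0 : Tendsto Δω atTop (nhds 0))
    (hinf : Tendsto (fun n : ℕ => (n : ℝ) * Δω n) atTop atTop) :
    Tendsto (fun n : ℕ => Δω n * ∑ j ∈ Finset.Icc 1 n, g ((j : ℝ) * Δω n)) atTop
      (nhds (∫ ω in Set.Ioi (0:ℝ), g ω)) := by
  set F : ℕ → ℝ := fun n => Δω n * ∑ j ∈ Finset.Icc 1 n, g ((j:ℝ) * Δω n) with hF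
  set S : ℕ → ℝ := fun n => ∫ x in (0:ℝ)..((n:ℝ) * Δω n), g x with hSdef
  have hS : Tendsto S atTop (nhds (∫ ω in Set.Ioi (0:ℝ), g ω)) :=
    intervalIntegral_tendsto_integral_Ioi 0 hg_int.integrableOn hinf
  have hdiff : Tendsto (fun n => F n - S n) atTop (nhds 0) := by
    have hb : Tendsto (fun n => Δω n * ∫ x, |h x|) atTop (nhds 0) := by
      simpa using h0.mul_const (∫ x, |h x|)
    refine squeeze_zero_norm (fun n => ?_) hb
    simpa [hF, hSdef, Real.norm_eq_abs] using
      riemann_est g h hderiv hh_int hh_cont (Δω n) (hΔωpos n) n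
  have := hS.add hdiff
  simp only [add_sub_cancel] at this
  simpa using this

/-- The Fourier transform `φ̂(ω) = ∫ e^{-iωt} φ(t) dt` of a real Schwartz function. -/
noncomputable def hatFn (φ : SchwartzMap ℝ ℝ) (ω : ℝ) : ℂ :=
  ∫ t : ℝ, Complex.exp (-(Complex.I * ω * t)) * (φ t : ℂ)

/-- Convergence of the heat-bath kernel: if `Δωₙ → 0` and `n·Δωₙ → ∞`, then
`Δωₙ ∑_{j=1}^n Re φ̂(jΔωₙ) → ∫₀^∞ Re φ̂(ω) dω`, and consequently
`∫ φ(t)·Δωₙ∑_{j=1}^n cos(jΔωₙ t) dt → π·φ(0)`, i.e. the kernels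
`Δωₙ ∑ cos(ω_j t)` converge to `π δ₀` distributionally. -/
theorem cosine_kernel_to_delta
    (φ : SchwartzMap ℝ ℝ)
    (Δω : ℕ → ℝ) (hΔωpos : ∀ n, 0 < Δω n)
    (h0 : Tendsto Δω atTop (nhds 0))
    (hinf : Tendsto (fun n : ℕ => (n : ℝ) * Δω n) atTop atTop) :
    Tendsto (fun n : ℕ =>
        Δω n * ∑ j ∈ Finset.Icc 1 n, (hatFn φ ((j : ℝ) * Δω n)).re)
      atTop (nhds (∫ ω in Set.Ioi (0 : ℝ), (hatFn φ ω).re)) ∧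
    Tendsto (fun n : ℕ =>
        ∫ t : ℝ, φ t * (Δω n * ∑ j ∈ Finset.Icc 1 n, Real.cos ((j : ℝ) * Δω n * t)))
      atTop (nhds (Real.pi * φ 0)) := by
  have pi_pos := Real.pi_pos
  have h2π : (2 * Real.pi) ≠ 0 := by positivity
  set φc := φ.toComplex with hφc
  set ψ : SchwartzMap ℝ ℂ := FourierTransform.fourierCLE ℝ (SchwartzMap ℝ ℂ) φc with hψdef
  have hψ : ⇑ψ = FourierTransform.fourier ⇑φc := by simp [hψdef, FourierTransform.fourierCLE_apply, SchwartzMap.fourier_coe]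
  have hatFn_eq : ∀ ω : ℝ, hatFn φ ω = ψ (ω / (2 * Real.pi)) := by
    intro ω
    rw [congrFun hψ (ω / (2 * Real.pi)),
      Real.fourier_real_eq_integral_exp_smul]
    unfold hatFn
    congr 1
    funext t
    rw [smul_eq_mul, SchwartzMap.toComplex_apply]
    congr 2
    have h : -2 * Real.pi * t * (ω / (2 * Real.pi)) = -(ω * t) := by
      field_simp
    rw [h]
    push_cast
    ring
  have hintg : ∀ ω : ℝ, Integrable
      (fun t : ℝ => Complex.exp (-(Complex.I * ω * t)) * (φ t : ℂ)) := by
    intro ω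
    have hm : Continuous (fun t : ℝ => Complex.exp (-(Complex.I * ω * t))) := by
      fun_prop
    refine (φc.integrable.bdd_mul (c := 1) hm.aestronglyMeasurable
      (Eventually.of_forall fun t => ?_)).congr
      (Eventually.of_forall fun t => by simp [hφc])
    rw [Complex.norm_exp]
    simp [Complex.mul_re]
  have hRe : ∀ ω : ℝ, (hatFn φ ω).re = ∫ t : ℝ, φ t * Real.cos (ω * t) := by
    intro ω
    have h := integral_re (hintg ω)
    simp only [RCLike.re_to_complex] at h
    unfold hatFn
    rw [← h]
    congr 1
    funext t
    have he : -(Complex.I * ω * t) = ((-(ω * t) : ℝ) : ℂ) * Complex.I := by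
      push_cast; ring
    rw [he, Complex.exp_mul_I]
    simp only [← Complex.ofReal_cos, ← Complex.ofReal_sin, add_mul,
      Complex.add_re, ← Complex.ofReal_mul, Complex.ofReal_re, Complex.mul_I_re,
      Complex.ofReal_im, Real.cos_neg, Real.sin_neg]
    rw [mul_right_comm, Complex.mul_I_re, ← Complex.ofReal_mul]
    simp [← Complex.ofReal_mul, Complex.sin_ofReal_im, mul_comm]
  set ψd : SchwartzMap ℝ ℂ := SchwartzMap.derivCLM ℝ ℂ ψ with hψd
  set G : ℝ → ℝ := fun ω => (ψ (ω / (2 * Real.pi))).re with hGdef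
  set H : ℝ → ℝ := fun ω => (2 * Real.pi)⁻¹ * (ψd (ω / (2 * Real.pi))).re with hHdef
  have hG : ∀ ω : ℝ, (hatFn φ ω).re = G ω := fun ω => by rw [hatFn_eq ω]
  have hGcos : ∀ ω : ℝ, G ω = ∫ t : ℝ, φ t * Real.cos (ω * t) := fun ω => by
    rw [← hG, hRe]
  have hHderiv : ∀ ω : ℝ, HasDerivAt G (H ω) ω := by
    intro ω
    have h1 : HasDerivAt (fun ω : ℝ => ω / (2 * Real.pi)) ((2 * Real.pi)⁻¹) ω := by
      simpa using (hasDerivAt_id ω).div_const (2 * Real.pi)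
    have h2 : HasDerivAt (⇑ψ) (deriv (⇑ψ) (ω / (2 * Real.pi))) (ω / (2 * Real.pi)) :=
      (ψ.differentiableAt).hasDerivAt
    have h3 := h2.scomp ω h1
    have h4 := Complex.reCLM.hasFDerivAt.comp_hasDerivAt ω h3
    convert h4 using 1
    case e'_9 => simp [hHdef, hψd, SchwartzMap.derivCLM_apply, Complex.smul_re]
    all_goals rfl
  have hG_int : Integrable G := by
    have h := ((ψ.integrable (μ := volume)).comp_div (R := 2 * Real.pi) h2π).re
    simpa [hGdef, RCLike.re_to_complex] using h
  have hH_int : Integrable H := by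
    have h := (((ψd.integrable (μ := volume)).comp_div (R := 2 * Real.pi) h2π).re).const_mul
      ((2 * Real.pi)⁻¹)
    simpa [hHdef, RCLike.re_to_complex] using h
  have hH_cont : Continuous H := by
    rw [hHdef]
    exact continuous_const.mul (Complex.continuous_re.comp
      (ψd.continuous.comp (continuous_id.div_const _)))
  have part1 := riemann_tendsto G H hHderiv hG_int hH_int hH_cont Δω hΔωpos h0 hinf
  have heven : ∀ ω : ℝ, G (-ω) = G ω := by
    intro ω
    rw [hGcos, hGcos]
    simp [neg_mul]
  have htotal : (∫ ω : ℝ, G ω) = 2 * ∫ ω in Set.Ioi (0:ℝ), G ω := by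
    have h1 := integral_comp_neg_Iic (c := (0:ℝ)) (f := G)
    simp_rw [heven] at h1
    rw [neg_zero] at h1
    rw [← integral_Iic_add_Ioi (hG_int.integrableOn) (hG_int.integrableOn), h1]
    ring
  have hinv : (∫ ω : ℝ, G ω) = 2 * Real.pi * φ 0 := by
    have hcomp : Integrable (fun ω : ℝ => ψ (ω / (2 * Real.pi))) :=
      (ψ.integrable).comp_div h2π
    have h1 : (∫ ω : ℝ, G ω) = (∫ ω : ℝ, ψ (ω / (2 * Real.pi))).re := by
      have h := integral_re hcomp
      simp only [RCLike.re_to_complex] at h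
      rw [hGdef]
      exact h
    have h2 : (∫ ω : ℝ, ψ (ω / (2 * Real.pi))) = (2 * Real.pi) • ∫ ω : ℝ, ψ ω := by
      rw [MeasureTheory.Measure.integral_comp_div (fun ω : ℝ => ψ ω) (2 * Real.pi),
        abs_of_pos (by positivity)]
    have h3 : (∫ ω : ℝ, ψ ω) = ((φ 0 : ℝ) : ℂ) := by
      have hψint : Integrable (FourierTransform.fourier ⇑φc) := by
        rw [← hψ]; exact ψ.integrable
      have hinvf := φc.continuous.fourierInv_fourier_eq φc.integrable hψint
      have h0' : FourierTransformInv.fourierInv (FourierTransform.fourier ⇑φc) 0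
          = ∫ v : ℝ, FourierTransform.fourier (⇑φc) v := by
        rw [Real.fourierInv_eq]
        simp
      rw [hψ, ← h0', hinvf]
      simp [hφc]
    rw [h1, h2, h3]
    simp [Complex.smul_re]
  have hval : (∫ ω in Set.Ioi (0:ℝ), G ω) = Real.pi * φ 0 := by
    rw [hinv] at htotal; linarith
  constructor
  · simp only [hG]
    exact part1
  · have heqfun : ∀ n : ℕ,
        (∫ t : ℝ, φ t * (Δω n * ∑ j ∈ Finset.Icc 1 n, Real.cos ((j : ℝ) * Δω n * t)))
          = Δω n * ∑ j ∈ Finset.Icc 1 n, G ((j : ℝ) * Δω n) := by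
      intro n
      have hintc : ∀ ω : ℝ, Integrable (fun t : ℝ => φ t * Real.cos (ω * t)) := by
        intro ω
        refine (φ.integrable.bdd_mul (c := 1)
          (Real.continuous_cos.comp (continuous_const.mul continuous_id)).aestronglyMeasurable
          (Eventually.of_forall fun t => ?_)).congr
          (Eventually.of_forall fun t => mul_comm _ _)
        simpa [Real.norm_eq_abs] using Real.abs_cos_le_one (ω * t)
      have e1 : (fun t : ℝ => φ t * (Δω n * ∑ j ∈ Finset.Icc 1 n, Real.cos ((j:ℝ) * Δω n * t)))
          = fun t : ℝ => Δω n * ∑ j ∈ Finset.Icc 1 n, (φ t * Real.cos ((j:ℝ) * Δω n * t)) := by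
        funext t
        simp only [Finset.mul_sum]
        exact Finset.sum_congr rfl fun j _ => by ring
      rw [e1, MeasureTheory.integral_const_mul,
        integral_finset_sum _ (fun j _ => hintc _)]
      congr 1
      exact Finset.sum_congr rfl fun j _ => (hGcos _).symm
    simp only [heqfun]
    rw [← hval]
    exact part1
end
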